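/- The function d_Teich(X, Y) = (1/2)·max{|log λ| : λ eigenvalue of XY⁻¹} is a metric on the set of positive-definite symmetric real n×n matrices of determinant 1: it is nonnegative, symmetric, vanishes exactly on the diagonal, and satisfies the triangle inequality. -/

import Mathlib

/-!
For positive definite `Y` pick an invertible `W` with `Wᴴ Y W = 1` (e.g. `W = Y^{-1/2}`). Then
`X Y⁻¹` is conjugate to the Hermitian matrix `Wᴴ X W`, so its spectrum lies in `[a, b]` iff
`a • Y ≤ X ≤ b • Y` in the Loewner order. Hence `d_Teich(X, Y) ≤ r` iff
`exp (-2r) • Y ≤ X ≤ exp (2r) • Y`; in this form the triangle inequality is the composition of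
two such sandwiches, and `d_Teich(X, Y) = 0` forces `Y ≤ X ≤ Y`. Symmetry: the spectrum of
`Y X⁻¹ = (X Y⁻¹)⁻¹` is the pointwise inverse of that of `X Y⁻¹`.
-/

open Matrix

/-- `d_Teich(X, Y) = (1/2) max { |log λ| : λ eigenvalue of X Y⁻¹ }`. -/
noncomputable def dTeich {n : ℕ} (X Y : Matrix (Fin n) (Fin n) ℝ) : ℝ :=
  (1 / 2) * sSup {r : ℝ | ∃ lam ∈ spectrum ℝ (X * Y⁻¹), r = |Real.log lam|}

open scoped MatrixOrder ComplexOrder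

namespace Matrix

variable {ι : Type*} [Fintype ι] [DecidableEq ι]

theorem inv_eq_mul_star_of_star_mul_mul_eq_one {K : Type*} [CommRing K] [StarRing K]
    {Y W : Matrix ι ι K} (h : star W * Y * W = 1) : Y⁻¹ = W * star W := by
  refine inv_eq_left_inv ?_
  rw [Matrix.mul_assoc, mul_eq_one_comm, Matrix.mul_assoc, ← Matrix.mul_assoc, h]

theorem spectrum_mul_inv_eq_of_star_mul_mul_eq_one {R K : Type*} [CommSemiring R] [CommRing K]
    [StarRing K] [Algebra R K] (X : Matrix ι ι K) {Y W : Matrix ι ι K} (hW : IsUnit W)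
    (h : star W * Y * W = 1) : spectrum R (X * Y⁻¹) = spectrum R (star W * X * W) := by
  obtain ⟨u, hu⟩ := hW.star
  rw [← spectrum.units_conjugate (u := u), inv_eq_mul_star_of_star_mul_mul_eq_one h, ← hu]
  simp only [Matrix.mul_assoc, Units.mul_inv, Matrix.mul_one]

theorem spectrum_mul_inv_comm {R K : Type*} [Field R] [CommRing K] [Algebra R K]
    {X Y : Matrix ι ι K} (hX : IsUnit X) (hY : IsUnit Y) :
    spectrum R (Y * X⁻¹) = (spectrum R (X * Y⁻¹))⁻¹ := by
  obtain ⟨u, hu⟩ := hX.mul ((isUnit_nonsing_inv_iff).2 hY)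
  rw [← hu, spectrum.map_inv, coe_units_inv, hu, Matrix.mul_inv_rev,
    nonsing_inv_nonsing_inv Y ((isUnit_iff_isUnit_det Y).1 hY)]

variable {𝕜 : Type*} [RCLike 𝕜]

theorem PosDef.exists_isUnit_star_mul_mul_eq_one {Y : Matrix ι ι 𝕜} (hY : Y.PosDef) :
    ∃ W : Matrix ι ι 𝕜, IsUnit W ∧ star W * Y * W = 1 := by
  set T := CFC.sqrt Y
  have hT : IsUnit T.det :=
    (isUnit_iff_isUnit_det T).1 ((CFC.isUnit_sqrt_iff Y hY.posSemidef.nonneg).2 hY.isUnit)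
  have hTs : IsHermitian T⁻¹ := (CFC.sqrt_nonneg Y).isSelfAdjoint.isHermitian.inv
  refine ⟨T⁻¹, (isUnit_nonsing_inv_iff).2 ((isUnit_iff_isUnit_det T).2 hT), ?_⟩
  rw [star_eq_conjTranspose, hTs.eq, ← CFC.sqrt_mul_sqrt_self Y hY.posSemidef.nonneg,
    ← Matrix.mul_assoc, nonsing_inv_mul _ hT, Matrix.one_mul, mul_nonsing_inv _ hT]

theorem star_mul_smul_mul_eq_algebraMap {Y W : Matrix ι ι 𝕜} (h : star W * Y * W = 1) (c : ℝ) :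
    star W * (c • Y) * W = algebraMap ℝ (Matrix ι ι 𝕜) c := by
  rw [Matrix.mul_smul, Matrix.smul_mul, h, Algebra.algebraMap_eq_smul_one]

theorem IsHermitian.le_smul_iff_forall_spectrum_mul_inv_le {X Y : Matrix ι ι 𝕜}
    (hX : X.IsHermitian) (hY : Y.PosDef) (c : ℝ) :
    X ≤ c • Y ↔ ∀ μ ∈ spectrum ℝ (X * Y⁻¹), μ ≤ c := by
  obtain ⟨W, hW, hWY⟩ := hY.exists_isUnit_star_mul_mul_eq_one
  rw [spectrum_mul_inv_eq_of_star_mul_mul_eq_one X hW hWY,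
    ← le_algebraMap_iff_spectrum_le (hX.isSelfAdjoint.conjugate' W), ← sub_nonneg,
    ← hW.star_left_conjugate_nonneg_iff, Matrix.mul_sub, Matrix.sub_mul,
    star_mul_smul_mul_eq_algebraMap hWY, sub_nonneg]

theorem IsHermitian.smul_le_iff_forall_le_spectrum_mul_inv {X Y : Matrix ι ι 𝕜}
    (hX : X.IsHermitian) (hY : Y.PosDef) (c : ℝ) :
    c • Y ≤ X ↔ ∀ μ ∈ spectrum ℝ (X * Y⁻¹), c ≤ μ := by
  obtain ⟨W, hW, hWY⟩ := hY.exists_isUnit_star_mul_mul_eq_one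
  rw [spectrum_mul_inv_eq_of_star_mul_mul_eq_one X hW hWY,
    ← algebraMap_le_iff_le_spectrum (hX.isSelfAdjoint.conjugate' W), ← sub_nonneg,
    ← hW.star_left_conjugate_nonneg_iff, Matrix.mul_sub, Matrix.sub_mul,
    star_mul_smul_mul_eq_algebraMap hWY, sub_nonneg]

theorem PosDef.pos_of_mem_spectrum_mul_inv {X Y : Matrix ι ι 𝕜} (hX : X.PosDef) (hY : Y.PosDef)
    {μ : ℝ} (hμ : μ ∈ spectrum ℝ (X * Y⁻¹)) : 0 < μ := by
  have hXY : (0 : ℝ) • Y ≤ X := by rw [zero_smul]; exact hX.posSemidef.nonneg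
  refine ((hX.isHermitian.smul_le_iff_forall_le_spectrum_mul_inv hY 0).1 hXY μ hμ).lt_of_ne ?_
  rintro rfl
  exact spectrum.zero_notMem ℝ (hX.isUnit.mul ((isUnit_nonsing_inv_iff).2 hY.isUnit)) hμ

end Matrix

section dTeich

variable {n : ℕ} {X Y Z : Matrix (Fin n) (Fin n) ℝ}

theorem dTeich_nonneg (X Y : Matrix (Fin n) (Fin n) ℝ) : 0 ≤ dTeich X Y := by
  unfold dTeich
  have : 0 ≤ sSup {r : ℝ | ∃ μ ∈ spectrum ℝ (X * Y⁻¹), r = |Real.log μ|} :=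
    Real.sSup_nonneg fun _ ⟨_, _, hr⟩ => hr ▸ abs_nonneg _
  positivity

theorem dTeich_le_iff_forall_abs_log_le {r : ℝ} (hr : 0 ≤ r) :
    dTeich X Y ≤ r ↔ ∀ μ ∈ spectrum ℝ (X * Y⁻¹), |Real.log μ| ≤ 2 * r := by
  have hbdd : BddAbove {r : ℝ | ∃ μ ∈ spectrum ℝ (X * Y⁻¹), r = |Real.log μ|} := by
    refine (((Matrix.finite_spectrum (X * Y⁻¹)).image fun μ => |Real.log μ|).bddAbove).mono ?_
    rintro _ ⟨μ, hμ, rfl⟩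
    exact ⟨μ, hμ, rfl⟩
  unfold dTeich
  constructor
  · intro h μ hμ
    have := le_csSup hbdd ⟨μ, hμ, rfl⟩
    linarith
  · intro h
    have : sSup {r : ℝ | ∃ μ ∈ spectrum ℝ (X * Y⁻¹), r = |Real.log μ|} ≤ 2 * r :=
      Real.sSup_le (by rintro _ ⟨μ, hμ, rfl⟩; exact h μ hμ) (by positivity)
    linarith

theorem dTeich_le_iff_smul_le_and_le_smul (hX : X.PosDef) (hY : Y.PosDef) {r : ℝ} (hr : 0 ≤ r) :
    dTeich X Y ≤ r ↔ Real.exp (-(2 * r)) • Y ≤ X ∧ X ≤ Real.exp (2 * r) • Y := by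
  rw [dTeich_le_iff_forall_abs_log_le hr, hX.isHermitian.smul_le_iff_forall_le_spectrum_mul_inv hY,
    hX.isHermitian.le_smul_iff_forall_spectrum_mul_inv_le hY, ← forall₂_and]
  refine forall₂_congr fun μ hμ => ?_
  have hμ₀ := hX.pos_of_mem_spectrum_mul_inv hY hμ
  rw [abs_le, Real.le_log_iff_exp_le hμ₀, Real.log_le_iff_le_exp hμ₀]

theorem dTeich_comm (hX : IsUnit X) (hY : IsUnit Y) : dTeich X Y = dTeich Y X := by
  unfold dTeich
  rw [Matrix.spectrum_mul_inv_comm hX hY]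
  congr 2
  ext r
  constructor
  · rintro ⟨μ, hμ, rfl⟩
    exact ⟨μ⁻¹, by rwa [Set.mem_inv, inv_inv], by rw [Real.log_inv, abs_neg]⟩
  · rintro ⟨μ, hμ, rfl⟩
    exact ⟨μ⁻¹, hμ, by rw [Real.log_inv, abs_neg]⟩

theorem dTeich_eq_zero_iff (hX : X.PosDef) (hY : Y.PosDef) : dTeich X Y = 0 ↔ X = Y := by
  rw [← (dTeich_nonneg X Y).ge_iff_eq', dTeich_le_iff_smul_le_and_le_smul hX hY le_rfl,
    le_antisymm_iff, and_comm]
  simp only [mul_zero, neg_zero, Real.exp_zero, one_smul]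

theorem dTeich_triangle (hX : X.PosDef) (hY : Y.PosDef) (hZ : Z.PosDef) :
    dTeich X Z ≤ dTeich X Y + dTeich Y Z := by
  set r := dTeich X Y
  set s := dTeich Y Z
  have hr := dTeich_nonneg X Y
  have hs := dTeich_nonneg Y Z
  obtain ⟨hXY, hXY'⟩ := (dTeich_le_iff_smul_le_and_le_smul hX hY hr).1 le_rfl
  obtain ⟨hYZ, hYZ'⟩ := (dTeich_le_iff_smul_le_and_le_smul hY hZ hs).1 le_rfl
  refine (dTeich_le_iff_smul_le_and_le_smul hX hZ (add_nonneg hr hs)).2 ⟨?_, ?_⟩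
  · calc Real.exp (-(2 * (r + s))) • Z = Real.exp (-(2 * r)) • Real.exp (-(2 * s)) • Z := by
          rw [smul_smul, ← Real.exp_add]; ring_nf
      _ ≤ Real.exp (-(2 * r)) • Y := smul_le_smul_of_nonneg_left hYZ (Real.exp_pos _).le
      _ ≤ X := hXY
  · calc X ≤ Real.exp (2 * r) • Y := hXY'
      _ ≤ Real.exp (2 * r) • Real.exp (2 * s) • Z :=
          smul_le_smul_of_nonneg_left hYZ' (Real.exp_pos _).le
      _ = Real.exp (2 * (r + s)) • Z := by rw [smul_smul, ← Real.exp_add]; ring_nf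

end dTeich

/-- `d_Teich` is a metric on the set of positive-definite symmetric real `n × n`
matrices of determinant 1: nonnegative, symmetric, vanishing exactly on the diagonal,
and satisfying the triangle inequality. -/
theorem dTeich_is_metric (n : ℕ) :
    (∀ X Y : Matrix (Fin n) (Fin n) ℝ, X.PosDef → Y.PosDef → X.det = 1 → Y.det = 1 →
      0 ≤ dTeich X Y) ∧
    (∀ X Y : Matrix (Fin n) (Fin n) ℝ, X.PosDef → Y.PosDef → X.det = 1 → Y.det = 1 →
      dTeich X Y = dTeich Y X) ∧
    (∀ X Y : Matrix (Fin n) (Fin n) ℝ, X.PosDef → Y.PosDef → X.det = 1 → Y.det = 1 →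
      (dTeich X Y = 0 ↔ X = Y)) ∧
    (∀ X Y Z : Matrix (Fin n) (Fin n) ℝ, X.PosDef → Y.PosDef → Z.PosDef →
      X.det = 1 → Y.det = 1 → Z.det = 1 →
      dTeich X Z ≤ dTeich X Y + dTeich Y Z) :=
  ⟨fun X Y _ _ _ _ => dTeich_nonneg X Y,
    fun _ _ hX hY _ _ => dTeich_comm hX.isUnit hY.isUnit,
    fun _ _ hX hY _ _ => dTeich_eq_zero_iff hX hY,
    fun _ _ _ hX hY hZ _ _ _ => dTeich_triangle hX hY hZ⟩
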